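/- Let s₁, s₂, s₃ > 0 and define s²(ρ₁,ρ₂,ρ₃) = s₁² + 4s₂² + s₃² − 4s₁s₂ρ₃ + 2s₁s₃ρ₂ − 4s₂s₃ρ₁, s₀² = s²(0,0,0), s̃_L² = min{(2s₂−(s₁+s₃))², (2s₂−√(s₁²+s₃²))²}, and s_L² = inf over the set D = {(ρ₁,ρ₂,ρ₃) : |ρᵢ| < 1 for all i, 1−ρ₁²−ρ₂²−ρ₃²+2ρ₁ρ₂ρ₃ > 0, s²(ρ₁,ρ₂,ρ₃) ≤ s₀²} of s²(ρ₁,ρ₂,ρ₃). Then s_L² ≤ s̃_L² ≤ s₀². -/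

import Mathlib

/-!
The function `s²` is affine in `ρ`, so along a ray `t ↦ t • v` it interpolates linearly between
`s₀²` and `s²(v)`. Hence whenever the half-open segment `[0, v)` lies in the open elliptope,
`s²(v)` is a limit of values in the constraint set and bounds the infimum from above. The two
candidate bounds are `s²(1, 1, 1) = (2s₂ - (s₁ + s₃))²` and `s²(s₃ / r, 0, s₁ / r) = (2s₂ - r)²`
with `r = √(s₁² + s₃²)`; both directions lie on the boundary of the elliptope.
-/

open Set

/-- `1 - ρ₁² - ρ₂² - ρ₃² + 2ρ₁ρ₂ρ₃` is the determinant of the correlation matrix with off-diagonal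
entries `ρ₁, ρ₂, ρ₃`, so this says that matrix is positive definite. -/
def IsPosDefCorrelation (ρ₁ ρ₂ ρ₃ : ℝ) : Prop :=
  |ρ₁| < 1 ∧ |ρ₂| < 1 ∧ |ρ₃| < 1 ∧ 0 < 1 - ρ₁^2 - ρ₂^2 - ρ₃^2 + 2*ρ₁*ρ₂*ρ₃

def correlationSublevelValues (f : ℝ → ℝ → ℝ → ℝ) : Set ℝ :=
  {y | ∃ ρ₁ ρ₂ ρ₃ : ℝ, |ρ₁| < 1 ∧ |ρ₂| < 1 ∧ |ρ₃| < 1 ∧ 0 < 1 - ρ₁^2 - ρ₂^2 - ρ₃^2 + 2*ρ₁*ρ₂*ρ₃ ∧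
    f ρ₁ ρ₂ ρ₃ ≤ f 0 0 0 ∧ y = f ρ₁ ρ₂ ρ₃}

/-- The variance of `X₁ - 2X₂ + X₃` when `Xᵢ` has standard deviation `sᵢ` and
`ρ₁ = corr(X₂, X₃)`, `ρ₂ = corr(X₁, X₃)`, `ρ₃ = corr(X₁, X₂)`. -/
def secondDiffVar (s₁ s₂ s₃ ρ₁ ρ₂ ρ₃ : ℝ) : ℝ :=
  s₁^2 + 4*s₂^2 + s₃^2 - 4*s₁*s₂*ρ₃ + 2*s₁*s₃*ρ₂ - 4*s₂*s₃*ρ₁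

lemma isPosDefCorrelation_diag {t : ℝ} (h₀ : -1/2 < t) (h₁ : t < 1) :
    IsPosDefCorrelation t t t := by
  have ht : |t| < 1 := abs_lt.mpr ⟨by linarith, h₁⟩
  refine ⟨ht, ht, ht, ?_⟩
  have hdet : 1 - t^2 - t^2 - t^2 + 2*t*t*t = (1 - t)^2 * (1 + 2*t) := by ring
  rw [hdet]
  exact mul_pos (pow_pos (by linarith) 2) (by linarith)

lemma isPosDefCorrelation_of_sq_add_sq_lt {x z : ℝ} (h : x^2 + z^2 < 1) :
    IsPosDefCorrelation x 0 z := by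
  refine ⟨?_, by simp, ?_, by linarith⟩
  · exact (sq_lt_one_iff_abs_lt_one x).mp (by nlinarith [sq_nonneg z])
  · exact (sq_lt_one_iff_abs_lt_one z).mp (by nlinarith [sq_nonneg x])

lemma csInf_le_of_forall_Ico_mem {S : Set ℝ} (hS : BddBelow S) {a b : ℝ}
    (h : ∀ t ∈ Ico (0:ℝ) 1, a + t * (b - a) ∈ S) : sInf S ≤ b := by
  have hb : b ∈ closure S := by
    have hcont : Continuous fun t : ℝ ↦ a + t * (b - a) := by fun_prop
    have h1 : (1:ℝ) ∈ closure (Ico 0 1) := by simp [closure_Ico zero_ne_one]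
    simpa using map_mem_closure hcont h1 h
  have hlower : sInf S ∈ lowerBounds (closure S) := by
    rw [lowerBounds_closure]
    exact fun y hy ↦ csInf_le hS hy
  exact hlower hb

section correlationSublevelValues

variable {f : ℝ → ℝ → ℝ → ℝ}

lemma csInf_correlationSublevelValues_le_zero (hbdd : BddBelow (correlationSublevelValues f)) :
    sInf (correlationSublevelValues f) ≤ f 0 0 0 :=
  csInf_le hbdd ⟨0, 0, 0, by norm_num, by norm_num, by norm_num, by norm_num, le_rfl, rfl⟩

lemma csInf_correlationSublevelValues_le (hbdd : BddBelow (correlationSublevelValues f))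
    (hray : ∀ t v₁ v₂ v₃, f (t*v₁) (t*v₂) (t*v₃) = f 0 0 0 + t * (f v₁ v₂ v₃ - f 0 0 0))
    {v₁ v₂ v₃ : ℝ} (hv : f v₁ v₂ v₃ ≤ f 0 0 0)
    (hseg : ∀ t ∈ Ico (0:ℝ) 1, IsPosDefCorrelation (t*v₁) (t*v₂) (t*v₃)) :
    sInf (correlationSublevelValues f) ≤ f v₁ v₂ v₃ := by
  refine csInf_le_of_forall_Ico_mem (a := f 0 0 0) hbdd fun t ht ↦ ?_
  obtain ⟨hρ₁, hρ₂, hρ₃, hdet⟩ := hseg t ht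
  refine ⟨t*v₁, t*v₂, t*v₃, hρ₁, hρ₂, hρ₃, hdet, ?_, (hray t v₁ v₂ v₃).symm⟩
  rw [hray]
  nlinarith [ht.1]

end correlationSublevelValues

section secondDiffVar

variable {s₁ s₂ s₃ : ℝ}

lemma secondDiffVar_mul (t v₁ v₂ v₃ : ℝ) :
    secondDiffVar s₁ s₂ s₃ (t*v₁) (t*v₂) (t*v₃) =
      secondDiffVar s₁ s₂ s₃ 0 0 0 +
        t * (secondDiffVar s₁ s₂ s₃ v₁ v₂ v₃ - secondDiffVar s₁ s₂ s₃ 0 0 0) := by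
  unfold secondDiffVar
  ring

lemma secondDiffVar_one_one_one : secondDiffVar s₁ s₂ s₃ 1 1 1 = (2*s₂ - (s₁ + s₃))^2 := by
  unfold secondDiffVar
  ring

lemma secondDiffVar_div_sqrt (h : 0 < s₁^2 + s₃^2) :
    secondDiffVar s₁ s₂ s₃ (s₃ / √(s₁^2 + s₃^2)) 0 (s₁ / √(s₁^2 + s₃^2)) =
      (2*s₂ - √(s₁^2 + s₃^2))^2 := by
  have hr : 0 < √(s₁^2 + s₃^2) := Real.sqrt_pos.mpr h
  have hr2 : √(s₁^2 + s₃^2)^2 = s₁^2 + s₃^2 := Real.sq_sqrt h.le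
  unfold secondDiffVar
  field_simp
  linear_combination (4*s₂ - √(s₁^2 + s₃^2)) * hr2

lemma sq_two_mul_sub_sqrt_le_secondDiffVar_zero (h₂ : 0 ≤ s₂) :
    (2*s₂ - √(s₁^2 + s₃^2))^2 ≤ secondDiffVar s₁ s₂ s₃ 0 0 0 := by
  have hr2 : √(s₁^2 + s₃^2)^2 = s₁^2 + s₃^2 := Real.sq_sqrt (by positivity)
  unfold secondDiffVar
  nlinarith [mul_nonneg h₂ (Real.sqrt_nonneg (s₁^2 + s₃^2))]

lemma bddBelow_correlationSublevelValues_secondDiffVar (h₁ : 0 ≤ s₁) (h₂ : 0 ≤ s₂)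
    (h₃ : 0 ≤ s₃) : BddBelow (correlationSublevelValues (secondDiffVar s₁ s₂ s₃)) := by
  refine ⟨secondDiffVar s₁ s₂ s₃ 0 0 0 - (4*s₁*s₂ + 2*s₁*s₃ + 4*s₂*s₃), ?_⟩
  rintro y ⟨ρ₁, ρ₂, ρ₃, hρ₁, hρ₂, hρ₃, -, -, rfl⟩
  rw [abs_lt] at hρ₁ hρ₂ hρ₃
  unfold secondDiffVar
  nlinarith [mul_nonneg h₁ h₂, mul_nonneg h₁ h₃, mul_nonneg h₂ h₃]

lemma csInf_correlationSublevelValues_secondDiffVar_le_add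
    (hbdd : BddBelow (correlationSublevelValues (secondDiffVar s₁ s₂ s₃))) :
    sInf (correlationSublevelValues (secondDiffVar s₁ s₂ s₃)) ≤ (2*s₂ - (s₁ + s₃))^2 := by
  rw [← secondDiffVar_one_one_one]
  by_cases hv : secondDiffVar s₁ s₂ s₃ 1 1 1 ≤ secondDiffVar s₁ s₂ s₃ 0 0 0
  · refine csInf_correlationSublevelValues_le hbdd secondDiffVar_mul hv fun t ht ↦ ?_
    simpa only [mul_one] using isPosDefCorrelation_diag (by linarith [ht.1]) ht.2
  · exact (csInf_correlationSublevelValues_le_zero hbdd).trans (le_of_not_ge hv)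

lemma csInf_correlationSublevelValues_secondDiffVar_le_sqrt
    (hbdd : BddBelow (correlationSublevelValues (secondDiffVar s₁ s₂ s₃))) (h₂ : 0 ≤ s₂)
    (h : 0 < s₁^2 + s₃^2) :
    sInf (correlationSublevelValues (secondDiffVar s₁ s₂ s₃)) ≤ (2*s₂ - √(s₁^2 + s₃^2))^2 := by
  rw [← secondDiffVar_div_sqrt h]
  have hv := secondDiffVar_div_sqrt (s₂ := s₂) h ▸ sq_two_mul_sub_sqrt_le_secondDiffVar_zero h₂
  refine csInf_correlationSublevelValues_le hbdd secondDiffVar_mul hv fun t ht ↦ ?_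
  rw [mul_zero]
  refine isPosDefCorrelation_of_sq_add_sq_lt ?_
  have hr2 : √(s₁^2 + s₃^2)^2 = s₁^2 + s₃^2 := Real.sq_sqrt h.le
  have hunit : (t * (s₃ / √(s₁^2 + s₃^2)))^2 + (t * (s₁ / √(s₁^2 + s₃^2)))^2 = t^2 := by
    field_simp
    linear_combination (-(t^2)) * hr2
  nlinarith [ht.1, ht.2]

end secondDiffVar

theorem stmt_7 (s₁ s₂ s₃ : ℝ) (h₁ : 0 < s₁) (h₂ : 0 < s₂) (h₃ : 0 < s₃)
    (s2 : ℝ → ℝ → ℝ → ℝ)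
    (hs2 : ∀ ρ₁ ρ₂ ρ₃ : ℝ, s2 ρ₁ ρ₂ ρ₃ =
      s₁^2 + 4*s₂^2 + s₃^2 - 4*s₁*s₂*ρ₃ + 2*s₁*s₃*ρ₂ - 4*s₂*s₃*ρ₁) :
    sInf {y : ℝ | ∃ ρ₁ ρ₂ ρ₃ : ℝ, |ρ₁| < 1 ∧ |ρ₂| < 1 ∧ |ρ₃| < 1 ∧
        0 < 1 - ρ₁^2 - ρ₂^2 - ρ₃^2 + 2*ρ₁*ρ₂*ρ₃ ∧
        s2 ρ₁ ρ₂ ρ₃ ≤ s2 0 0 0 ∧ y = s2 ρ₁ ρ₂ ρ₃}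
      ≤ min ((2*s₂ - (s₁ + s₃))^2) ((2*s₂ - Real.sqrt (s₁^2 + s₃^2))^2) ∧
    min ((2*s₂ - (s₁ + s₃))^2) ((2*s₂ - Real.sqrt (s₁^2 + s₃^2))^2)
      ≤ s2 0 0 0 := by
  obtain rfl : s2 = secondDiffVar s₁ s₂ s₃ := funext fun ρ₁ ↦ funext fun ρ₂ ↦ funext (hs2 ρ₁ ρ₂)
  have hbdd := bddBelow_correlationSublevelValues_secondDiffVar h₁.le h₂.le h₃.le
  refine ⟨le_min (csInf_correlationSublevelValues_secondDiffVar_le_add hbdd)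
    (csInf_correlationSublevelValues_secondDiffVar_le_sqrt hbdd h₂.le (by positivity)), ?_⟩
  exact (min_le_right _ _).trans (sq_two_mul_sub_sqrt_le_secondDiffVar_zero h₂.le)
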